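/- arXiv:math/9712221 — 5 statements merged into one kernel-verified Lean document; each statement's English description precedes it below -/
import Mathlib

section
/- Let F' be the free group on generators x_1,…,x_g and let F be the free group on generators x_1,…,x_g,y_1,…,y_g. Let δ : F' → F be the group homomorphism determined by δ(x_i) = [x_i, y_i] (the commutator of x_i and y_i in F). Then for every n ≥ 1, δ maps the n-th lower central series subgroup F'_n into the 2n-th lower central series subgroup F_{2n}; that is, if w ∈ F'_n then δ(w) ∈ F_{2n}. -/
open Subgroup

open scoped commutatorElement

/-!
Since `[G_a, G_b] ≤ G_{a+b}` (three subgroups lemma), a homomorphism whose image lies in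
`H_{k+1}` sends `G_{n+1} = [G_n, G]` into `[H_{(k+1)n}, H_{k+1}] ≤ H_{(k+1)(n+1)}`.
For `δ` the generators go to commutators, so `k = 1`.
Here `lowerCentralSeries ⊤ i` is `G_{i+1}`, whence indices such as `k * n + k + n`.
-/

namespace Subgroup

variable {G : Type*} [Group G]

theorem commutator_commutator_le_of_rotate {A B C N : Subgroup G} [N.Normal]
    (h₁ : ⁅⁅B, C⁆, A⁆ ≤ N) (h₂ : ⁅⁅C, A⁆, B⁆ ≤ N) : ⁅⁅A, B⁆, C⁆ ≤ N := by
  let π := QuotientGroup.mk' N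
  have le_iff_map_eq_bot : ∀ {X Y Z : Subgroup G},
      ⁅⁅X, Y⁆, Z⁆ ≤ N ↔ ⁅⁅X.map π, Y.map π⁆, Z.map π⁆ = ⊥ := by
    intro X Y Z
    rw [← map_commutator, ← map_commutator, map_eq_bot_iff, QuotientGroup.ker_mk']
  rw [le_iff_map_eq_bot] at h₁ h₂ ⊢
  exact commutator_commutator_eq_bot_of_rotate h₁ h₂

theorem commutator_lowerCentralSeries_le (m k : ℕ) :
    ⁅(⊤ : Subgroup G).lowerCentralSeries m, (⊤ : Subgroup G).lowerCentralSeries k⁆ ≤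
      (⊤ : Subgroup G).lowerCentralSeries (m + k + 1) := by
  induction k generalizing m with
  | zero => exact le_rfl
  | succ k ih =>
    rw [lowerCentralSeries_succ, commutator_comm]
    apply commutator_commutator_le_of_rotate
    · rw [commutator_comm ⊤, ← lowerCentralSeries_succ]
      simpa [Nat.add_right_comm, Nat.add_assoc] using ih (m + 1)
    · calc ⁅⁅(⊤ : Subgroup G).lowerCentralSeries m, (⊤ : Subgroup G).lowerCentralSeries k⁆, ⊤⁆
          ≤ ⁅(⊤ : Subgroup G).lowerCentralSeries (m + k + 1), ⊤⁆ := commutator_mono (ih m) le_rfl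
        _ = (⊤ : Subgroup G).lowerCentralSeries (m + (k + 1) + 1) := by
          rw [← lowerCentralSeries_succ, Nat.add_assoc m k 1]

theorem map_lowerCentralSeries_le_of_range_le {H : Type*} [Group H] (f : G →* H) {k : ℕ}
    (hf : f.range ≤ (⊤ : Subgroup H).lowerCentralSeries k) (n : ℕ) :
    (lowerCentralSeries ⊤ n).map f ≤ (⊤ : Subgroup H).lowerCentralSeries (k * n + k + n) := by
  induction n with
  | zero => simpa [← MonoidHom.range_eq_map] using hf
  | succ n ih =>
    calc ((⊤ : Subgroup G).lowerCentralSeries (n + 1)).map f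
        = ⁅((⊤ : Subgroup G).lowerCentralSeries n).map f, f.range⁆ := by
          rw [lowerCentralSeries_succ, map_commutator, MonoidHom.range_eq_map]
      _ ≤ ⁅(⊤ : Subgroup H).lowerCentralSeries (k * n + k + n),
            (⊤ : Subgroup H).lowerCentralSeries k⁆ := commutator_mono ih hf
      _ ≤ (⊤ : Subgroup H).lowerCentralSeries (k * (n + 1) + k + (n + 1)) := by
        convert commutator_lowerCentralSeries_le _ _ using 2
        ring

end Subgroup

theorem FreeGroup.range_le_of_forall_of_mem {α G : Type*} [Group G] (f : FreeGroup α →* G)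
    {S : Subgroup G} (h : ∀ a, f (FreeGroup.of a) ∈ S) : f.range ≤ S := by
  rw [MonoidHom.range_eq_map, ← closure_range_of, MonoidHom.map_closure, closure_le]
  rintro _ ⟨_, ⟨a, rfl⟩, rfl⟩
  exact h a

/-- `F'` is the free group on `x_1, …, x_g` (indexed by `Fin g`), `F` is the free group on
`x_1, …, x_g, y_1, …, y_g` (indexed by `Fin g ⊕ Fin g`, with `Sum.inl i` corresponding to `x_i`
and `Sum.inr i` to `y_i`).  `δ : F' → F` is the homomorphism with `δ(x_i) = [x_i, y_i]`.
Here `lowerCentralSeries G n` is the `(n+1)`-st term `G_{n+1}` of the lower central series in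
the paper's indexing (`G_1 = G`, `G_{q+1} = [G, G_q]`).  The statement: if `w ∈ F'_{n+1}` then
`δ(w) ∈ F_{2(n+1)}`, i.e. `δ` maps `lowerCentralSeries F' n` into
`lowerCentralSeries F (2*n+1)`. -/
theorem delta_maps_lcs_into_double (g : ℕ) (n : ℕ)
    (δ : FreeGroup (Fin g) →* FreeGroup (Fin g ⊕ Fin g))
    (hδ : ∀ i : Fin g, δ (FreeGroup.of i) =
      ⁅FreeGroup.of (Sum.inl i : Fin g ⊕ Fin g), FreeGroup.of (Sum.inr i : Fin g ⊕ Fin g)⁆)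
    (w : FreeGroup (Fin g)) (hw : w ∈ (⊤ : Subgroup (FreeGroup (Fin g))).lowerCentralSeries n) :
    δ w ∈ (⊤ : Subgroup (FreeGroup (Fin g ⊕ Fin g))).lowerCentralSeries (2 * n + 1) := by
  have hrange : δ.range ≤ (⊤ : Subgroup (FreeGroup (Fin g ⊕ Fin g))).lowerCentralSeries 1 :=
    FreeGroup.range_le_of_forall_of_mem δ fun i => by
      rw [hδ i]
      exact commutator_mem_commutator (mem_top _) (mem_top _)
  rw [show 2 * n + 1 = 1 * n + 1 + n by ring]
  exact map_lowerCentralSeries_le_of_range_le δ hrange n (mem_map_of_mem δ hw)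
end

section
/- Let H be a free ℤ-module with basis x_1,…,x_g,y_1,…,y_g and let L ⊆ H be the submodule spanned by x_1,…,x_g. For 0 ≤ m ≤ 3 let K_m ⊆ Λ³H be the subgroup generated by all elements h_1 ∧ h_2 ∧ h_3 in which at least m of the h_i lie in L, and set K_4 = 0. Let f : H → H be a ℤ-linear map such that f(x) = x for every x ∈ L and f(h) − h ∈ L for every h ∈ H. Then the induced map Λ³f on Λ³H satisfies (Λ³f − id)(K_m) ⊆ K_{m+1} for every m with 0 ≤ m ≤ 3 (where K_0 = Λ³H and K_3 = Λ³L). -/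
open ExteriorAlgebra

/-- The wedge `v 0 ∧ ⋯ ∧ v (n-1)` in the `n`-th exterior power `⋀[ℤ]^n M`. -/
noncomputable def wedge {M : Type*} [AddCommGroup M] [Module ℤ M] (n : ℕ) (v : Fin n → M) :
    ⋀[ℤ]^n M :=
  ⟨ιMulti ℤ n v, ιMulti_range ℤ n (Set.mem_range_self v)⟩

/-!
Write `f = id + δ` with `δ = f - id`, so `δ` kills `L` and takes values in `L`. Expanding
`Λ³f (v₀ ∧ v₁ ∧ v₂)` multilinearly, `Λ³f w - w` is the sum of the wedges in which a nonempty
set `T` of factors `vᵢ` is replaced by `δ vᵢ`. If `T` meets the factors already in `L`, that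
wedge vanishes; otherwise it has strictly more factors in `L` than `w`.
-/

theorem MultilinearMap.map_add_sub_map {R ι M N : Type*} [CommSemiring R] [DecidableEq ι]
    [Fintype ι] [AddCommMonoid M] [Module R M] [AddCommGroup N] [Module R N]
    (φ : MultilinearMap R (fun _ : ι => M) N) (d v : ι → M) :
    φ (d + v) - φ v = ∑ T ∈ Finset.univ.erase (∅ : Finset ι), φ (T.piecewise d v) := by
  rw [φ.map_add_univ, ← Finset.add_sum_erase _ _ (Finset.mem_univ ∅), Finset.piecewise_empty,
    add_sub_cancel_left]

section Wedge

variable {M : Type*} [AddCommGroup M] [Module ℤ M] {n : ℕ}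

theorem coe_wedge (v : Fin n → M) : (wedge n v : ExteriorAlgebra ℤ M) = ιMulti ℤ n v := rfl

theorem wedge_eq_zero_of_eq_zero {v : Fin n → M} (i : Fin n) (hi : v i = 0) : wedge n v = 0 := by
  apply Subtype.ext
  rw [coe_wedge, (ιMulti ℤ n (M := M)).map_coord_zero i hi, ZeroMemClass.coe_zero]

theorem wedge_add_sub_wedge (d v : Fin n → M) :
    wedge n (d + v) - wedge n v =
      ∑ T ∈ Finset.univ.erase (∅ : Finset (Fin n)), wedge n (T.piecewise d v) := by
  apply Subtype.ext
  push_cast [coe_wedge]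
  exact (ιMulti ℤ n (M := M)).toMultilinearMap.map_add_sub_map d v

variable (n) in
noncomputable def wedgeFiltration (L : Submodule ℤ M) (m : ℕ) : Submodule ℤ (⋀[ℤ]^n M) :=
  Submodule.span ℤ {w | ∃ v : Fin n → M,
    (∃ s : Finset (Fin n), m ≤ s.card ∧ ∀ i ∈ s, v i ∈ L) ∧ w = wedge n v}

theorem wedge_mem_wedgeFiltration {L : Submodule ℤ M} {m : ℕ} {v : Fin n → M}
    {s : Finset (Fin n)} (hs : m ≤ s.card) (hv : ∀ i ∈ s, v i ∈ L) :
    wedge n v ∈ wedgeFiltration n L m :=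
  Submodule.subset_span ⟨v, ⟨s, hs, hv⟩, rfl⟩

theorem wedge_piecewise_mem_wedgeFiltration_succ {L : Submodule ℤ M} {m : ℕ}
    {d v : Fin n → M} {s T : Finset (Fin n)} (hs : m ≤ s.card) (hv : ∀ i ∈ s, v i ∈ L)
    (hdL : ∀ i, d i ∈ L) (hd₀ : ∀ i ∈ s, d i = 0) (hT : T.Nonempty) :
    wedge n (T.piecewise d v) ∈ wedgeFiltration n L (m + 1) := by
  by_cases hTs : T ⊆ s
  · obtain ⟨i, hi⟩ := hT
    rw [wedge_eq_zero_of_eq_zero i (by rw [T.piecewise_eq_of_mem _ _ hi, hd₀ i (hTs hi)])]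
    exact Submodule.zero_mem _
  · obtain ⟨i, hiT, his⟩ := Finset.not_subset.1 hTs
    refine wedge_mem_wedgeFiltration (s := s ∪ T) ?_ fun j hj => ?_
    · calc m + 1 ≤ (insert i s).card := by rw [Finset.card_insert_of_notMem his]; omega
        _ ≤ (s ∪ T).card := Finset.card_le_card (Finset.insert_subset
            (Finset.mem_union_right _ hiT) Finset.subset_union_left)
    · by_cases hjT : j ∈ T
      · rw [T.piecewise_eq_of_mem _ _ hjT]; exact hdL j
      · rw [T.piecewise_eq_of_notMem _ _ hjT]
        exact hv j ((Finset.mem_union.1 hj).resolve_right hjT)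

theorem map_sub_self_mem_wedgeFiltration_succ {L : Submodule ℤ M} {f : M →ₗ[ℤ] M}
    (hf₁ : ∀ x ∈ L, f x = x) (hf₂ : ∀ h, f h - h ∈ L) {F : (⋀[ℤ]^n M) →ₗ[ℤ] (⋀[ℤ]^n M)}
    (hF : ∀ v : Fin n → M, F (wedge n v) = wedge n (f ∘ v)) (m : ℕ) :
    ∀ w ∈ wedgeFiltration n L m, F w - w ∈ wedgeFiltration n L (m + 1) := by
  suffices wedgeFiltration n L m ≤ (wedgeFiltration n L (m + 1)).comap (F - LinearMap.id) from
    fun w hw => this hw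
  refine Submodule.span_le.2 ?_
  rintro _ ⟨v, ⟨s, hs, hv⟩, rfl⟩
  have hfv : f ∘ v = (fun i => f (v i) - v i) + v := by funext i; simp
  simp only [SetLike.mem_coe, Submodule.mem_comap, LinearMap.sub_apply, LinearMap.id_apply, hF,
    hfv, wedge_add_sub_wedge]
  refine Submodule.sum_mem _ fun T hT => ?_
  exact wedge_piecewise_mem_wedgeFiltration_succ hs hv (fun i => hf₂ (v i))
    (fun i hi => by rw [hf₁ _ (hv i hi), sub_self])
    (Finset.nonempty_iff_ne_empty.2 (Finset.ne_of_mem_erase hT))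

end Wedge

theorem lambda3_sub_id_maps_K_general (H : Type) [AddCommGroup H] [Module ℤ H]
    (L : Submodule ℤ H)
    (K : ℕ → Submodule ℤ (⋀[ℤ]^3 H))
    (hK : ∀ m, K m = Submodule.span ℤ {w : ⋀[ℤ]^3 H | ∃ v : Fin 3 → H,
      (∃ s : Finset (Fin 3), m ≤ s.card ∧ ∀ i ∈ s, v i ∈ L) ∧ w = wedge 3 v})
    (f : H →ₗ[ℤ] H)
    (hf₁ : ∀ x ∈ L, f x = x)
    (hf₂ : ∀ h : H, f h - h ∈ L)
    (F : (⋀[ℤ]^3 H) →ₗ[ℤ] (⋀[ℤ]^3 H))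
    (hF : ∀ v : Fin 3 → H, F (wedge 3 v) = wedge 3 (f ∘ v))
    (m : ℕ) :
    ∀ w ∈ K m, F w - w ∈ K (m + 1) := by
  have hK' : ∀ m, K m = wedgeFiltration 3 L m := hK
  simpa only [hK'] using map_sub_self_mem_wedgeFiltration_succ hf₁ hf₂ hF m

/-- `H` is free with basis `x_1,…,x_g,y_1,…,y_g` (indexed by `Fin g ⊕ Fin g`), `L` is the span
of the `x_i`.  `K m ⊆ Λ³H` is the subgroup generated by wedges `h₁ ∧ h₂ ∧ h₃` with at least `m`
of the `h_i` in `L` (so `K 0 = Λ³H`, `K 3 = Λ³L`, and `K 4 = 0` since the generating set is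
then empty).  If `f : H → H` is ℤ-linear, the identity on `L`, with `f h - h ∈ L` for all `h`,
and `F = Λ³f` is the induced map on `Λ³H`, then `(Λ³f - id)(K m) ⊆ K (m+1)` for `m ≤ 3`. -/
theorem lambda3_sub_id_maps_K (g : ℕ) (H : Type) [AddCommGroup H] [Module ℤ H]
    (b : Module.Basis (Fin g ⊕ Fin g) ℤ H)
    (L : Submodule ℤ H)
    (hL : L = Submodule.span ℤ (Set.range fun i : Fin g => b (Sum.inl i)))
    (K : ℕ → Submodule ℤ (⋀[ℤ]^3 H))
    (hK : ∀ m, K m = Submodule.span ℤ {w : ⋀[ℤ]^3 H | ∃ v : Fin 3 → H,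
      (∃ s : Finset (Fin 3), m ≤ s.card ∧ ∀ i ∈ s, v i ∈ L) ∧ w = wedge 3 v})
    (f : H →ₗ[ℤ] H)
    (hf₁ : ∀ x ∈ L, f x = x)
    (hf₂ : ∀ h : H, f h - h ∈ L)
    (F : (⋀[ℤ]^3 H) →ₗ[ℤ] (⋀[ℤ]^3 H))
    (hF : ∀ v : Fin 3 → H, F (wedge 3 v) = wedge 3 (f ∘ v))
    (m : ℕ) (hm : m ≤ 3) :
    ∀ w ∈ K m, F w - w ∈ K (m + 1) :=
  lambda3_sub_id_maps_K_general H L K hK f hf₁ hf₂ F hF m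
end

section
/- Let H be a free ℤ-module with symplectic basis x_1,…,x_g,y_1,…,y_g (so x_i·x_j = y_i·y_j = 0 and x_i·y_j = δ_{ij} for the intersection pairing) and let L ⊆ H be the Lagrangian submodule spanned by x_1,…,x_g. Let p : Λ³H → Λ³(H/L) be the map induced by the projection H → H/L, and let c : Λ³H → H/L be the composition of the contraction h_1 ∧ h_2 ∧ h_3 ↦ (h_1·h_2)h_3 + (h_2·h_3)h_1 + (h_3·h_1)h_2 with the projection H → H/L. Then the kernel K of p ⊕ c : Λ³H → Λ³(H/L) ⊕ H/L equals the subgroup of Λ³H generated by the following elements: (1) x_i ∧ x_j ∧ x_k for any i, j, k; (2) x_i ∧ x_j ∧ y_k for any i, j, k; (3) x_i ∧ y_j ∧ y_k for i, j, k distinct; (4) y_i ∧ x_i ∧ y_k + x_j ∧ y_j ∧ y_k for i, j, k distinct. -/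
open ExteriorAlgebra

section Wedge

variable {M : Type*} [AddCommGroup M] [Module ℤ M]

theorem wedge_swap01 (a₁ a₂ a₃ : M) : wedge 3 ![a₂, a₁, a₃] = -wedge 3 ![a₁, a₂, a₃] := by
  have h := (exteriorPower.ιMulti ℤ (M := M) 3).map_swap ![a₁, a₂, a₃]
    (i := 0) (j := 1) (by decide)
  rwa [show ![a₁, a₂, a₃] ∘ Equiv.swap 0 1 = ![a₂, a₁, a₃] by ext t; fin_cases t <;> rfl] at h

theorem wedge_swap12 (a₁ a₂ a₃ : M) : wedge 3 ![a₁, a₃, a₂] = -wedge 3 ![a₁, a₂, a₃] := by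
  have h := (exteriorPower.ιMulti ℤ (M := M) 3).map_swap ![a₁, a₂, a₃]
    (i := 1) (j := 2) (by decide)
  rwa [show ![a₁, a₂, a₃] ∘ Equiv.swap 1 2 = ![a₁, a₃, a₂] by ext t; fin_cases t <;> rfl] at h

theorem wedge_swap02 (a₁ a₂ a₃ : M) : wedge 3 ![a₃, a₂, a₁] = -wedge 3 ![a₁, a₂, a₃] := by
  have h := (exteriorPower.ιMulti ℤ (M := M) 3).map_swap ![a₁, a₂, a₃]
    (i := 0) (j := 2) (by decide)
  rwa [show ![a₁, a₂, a₃] ∘ Equiv.swap 0 2 = ![a₃, a₂, a₁] by ext t; fin_cases t <;> rfl] at h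

theorem wedge_self12 (a₁ a₂ : M) : wedge 3 ![a₁, a₂, a₂] = 0 :=
  (exteriorPower.ιMulti ℤ (M := M) 3).map_eq_zero_of_eq ![a₁, a₂, a₂] (i := 1) (j := 2) rfl
    (by decide)

theorem wedge_eq_zero_of_apply_eq_zero {n : ℕ} {v : Fin n → M} (i : Fin n) (hv : v i = 0) :
    wedge n v = 0 :=
  (exteriorPower.ιMulti ℤ (M := M) n).map_coord_zero i hv

theorem span_wedge_comp_basis {ι : Type*} (b : Module.Basis ι ℤ M) (n : ℕ) :
    Submodule.span ℤ (Set.range fun σ : Fin n → ι => wedge n (b ∘ σ)) = ⊤ := by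
  have h := exteriorPower.ιMulti_span_of_span ℤ n M b.span_eq
  refine top_unique (h.symm.le.trans (Submodule.span_mono ?_))
  rintro _ ⟨v, hv, rfl⟩
  obtain ⟨σ, rfl⟩ := Set.range_subset_range_iff_exists_comp.1 hv
  exact ⟨σ, rfl⟩

variable {ι κ : Type*}

def sortedBasisWedges (b : Module.Basis (ι ⊕ κ) ℤ M) : Set (⋀[ℤ]^3 M) :=
  {w | ∃ i j k, w = wedge 3 ![b (.inl i), b (.inl j), b (.inl k)]} ∪
  {w | ∃ i j k, w = wedge 3 ![b (.inl i), b (.inl j), b (.inr k)]} ∪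
  {w | ∃ i j k, w = wedge 3 ![b (.inl i), b (.inr j), b (.inr k)]} ∪
  {w | ∃ i j k, w = wedge 3 ![b (.inr i), b (.inr j), b (.inr k)]}

theorem span_sortedBasisWedges (b : Module.Basis (ι ⊕ κ) ℤ M) :
    Submodule.span ℤ (sortedBasisWedges b) = ⊤ := by
  rw [eq_top_iff, ← span_wedge_comp_basis b 3, Submodule.span_le]
  rintro _ ⟨σ, rfl⟩
  have hσ : b ∘ σ = ![b (σ 0), b (σ 1), b (σ 2)] := by ext t; fin_cases t <;> rfl
  simp only [SetLike.mem_coe, hσ]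
  set S := Submodule.span ℤ (sortedBasisWedges b)
  have xxx : ∀ i j k, wedge 3 ![b (.inl i), b (.inl j), b (.inl k)] ∈ S :=
    fun i j k => Submodule.subset_span (.inl (.inl (.inl ⟨i, j, k, rfl⟩)))
  have xxy : ∀ i j k, wedge 3 ![b (.inl i), b (.inl j), b (.inr k)] ∈ S :=
    fun i j k => Submodule.subset_span (.inl (.inl (.inr ⟨i, j, k, rfl⟩)))
  have xyy : ∀ i j k, wedge 3 ![b (.inl i), b (.inr j), b (.inr k)] ∈ S :=
    fun i j k => Submodule.subset_span (.inl (.inr ⟨i, j, k, rfl⟩))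
  have yyy : ∀ i j k, wedge 3 ![b (.inr i), b (.inr j), b (.inr k)] ∈ S :=
    fun i j k => Submodule.subset_span (.inr ⟨i, j, k, rfl⟩)
  rcases σ 0 with i | i <;> rcases σ 1 with j | j <;> rcases σ 2 with k | k
  · exact xxx i j k
  · exact xxy i j k
  · rw [wedge_swap12]; exact neg_mem (xxy i k j)
  · exact xyy i j k
  · rw [wedge_swap02]; exact neg_mem (xxy k j i)
  · rw [wedge_swap01]; exact neg_mem (xyy j i k)
  · rw [wedge_swap02]; exact neg_mem (xyy k j i)
  · exact yyy i j k

end Wedge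

theorem LinearMap.ker_le_of_forall_sub_mem {R M N : Type*} [Ring R] [AddCommGroup M] [Module R M]
    [AddCommGroup N] [Module R N] {f : M →ₗ[R] N} (Q : N →ₗ[R] M) {S : Submodule R M}
    (h : ∀ w, w - Q (f w) ∈ S) : LinearMap.ker f ≤ S := fun w hw => by
  simpa [LinearMap.mem_ker.1 hw] using h w

section Symplectic

variable {ι H : Type*} [AddCommGroup H] [Module ℤ H] (b : Module.Basis (ι ⊕ ι) ℤ H)

def kernelGenerators : Set (⋀[ℤ]^3 H) :=
  {w : ⋀[ℤ]^3 H | ∃ i j k : ι,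
      w = wedge 3 ![b (Sum.inl i), b (Sum.inl j), b (Sum.inl k)]} ∪
   {w : ⋀[ℤ]^3 H | ∃ i j k : ι,
      w = wedge 3 ![b (Sum.inl i), b (Sum.inl j), b (Sum.inr k)]} ∪
   {w : ⋀[ℤ]^3 H | ∃ i j k : ι, i ≠ j ∧ j ≠ k ∧ i ≠ k ∧
      w = wedge 3 ![b (Sum.inl i), b (Sum.inr j), b (Sum.inr k)]} ∪
   {w : ⋀[ℤ]^3 H | ∃ i j k : ι, i ≠ j ∧ j ≠ k ∧ i ≠ k ∧
      w = wedge 3 ![b (Sum.inr i), b (Sum.inl i), b (Sum.inr k)] +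
          wedge 3 ![b (Sum.inl j), b (Sum.inr j), b (Sum.inr k)]}

noncomputable def projInr : H →ₗ[ℤ] H := b.constr ℕ (Sum.elim 0 fun i => b (.inr i))

theorem projInr_inl (i : ι) : projInr b (b (.inl i)) = 0 := b.constr_basis ℕ _ (.inl i)

theorem projInr_inr (i : ι) : projInr b (b (.inr i)) = b (.inr i) := b.constr_basis ℕ _ (.inr i)

theorem span_inl_le_ker_projInr :
    Submodule.span ℤ (Set.range fun i => b (.inl i)) ≤ LinearMap.ker (projInr b) :=
  Submodule.span_le.2 <| Set.range_subset_iff.2 fun i => projInr_inl b i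

noncomputable def partner (k : ι) : ι := @Classical.epsilon ι ⟨k⟩ (· ≠ k)

theorem partner_ne {i k : ι} (h : i ≠ k) : partner k ≠ k :=
  Classical.epsilon_spec (p := (· ≠ k)) ⟨i, h⟩

noncomputable def partnerWedge : H →ₗ[ℤ] ⋀[ℤ]^3 H :=
  b.constr ℕ <| Sum.elim 0 fun k =>
    wedge 3 ![b (.inl (partner k)), b (.inr (partner k)), b (.inr k)]

theorem partnerWedge_inr (k : ι) : partnerWedge b (b (.inr k)) =
    wedge 3 ![b (.inl (partner k)), b (.inr (partner k)), b (.inr k)] :=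
  b.constr_basis ℕ _ (.inr k)

theorem wedge_inl_inr_inr_sub_mem {i j k : ι} (hik : i ≠ k) (hjk : j ≠ k) :
    wedge 3 ![b (.inl i), b (.inr i), b (.inr k)] -
      wedge 3 ![b (.inl j), b (.inr j), b (.inr k)] ∈ Submodule.span ℤ (kernelGenerators b) := by
  by_cases hji : j = i
  · rw [hji, sub_self]
    exact zero_mem _
  · have hgen := Submodule.subset_span (R := ℤ) (s := kernelGenerators b)
      (.inr ⟨j, i, k, hji, hik, hjk, rfl⟩)
    rwa [wedge_swap01, neg_add_eq_sub] at hgen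

theorem sub_mem_span_kernelGenerators {R : ⋀[ℤ]^3 H →ₗ[ℤ] ⋀[ℤ]^3 H}
    (hR : Submodule.span ℤ (kernelGenerators b) ≤ LinearMap.ker R)
    (hR_inl_inr_inr : ∀ i k, i ≠ k → ∃ j, j ≠ k ∧
      R (wedge 3 ![b (.inl i), b (.inr i), b (.inr k)]) =
        wedge 3 ![b (.inl j), b (.inr j), b (.inr k)])
    (hR_inr_inr_inr : ∀ i j k, R (wedge 3 ![b (.inr i), b (.inr j), b (.inr k)]) =
      wedge 3 ![b (.inr i), b (.inr j), b (.inr k)])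
    (w : ⋀[ℤ]^3 H) : w - R w ∈ Submodule.span ℤ (kernelGenerators b) := by
  set S := Submodule.span ℤ (kernelGenerators b)
  let T := LinearMap.id - R
  have hT : ∀ w, T w = w - R w := fun _ => rfl
  have hT_mem : ∀ w ∈ S, T w ∈ S := fun w hw => by
    rwa [hT, LinearMap.mem_ker.1 (hR hw), sub_zero]
  have hT_inl_inr_inr_self : ∀ {i k}, i ≠ k →
      T (wedge 3 ![b (.inl i), b (.inr i), b (.inr k)]) ∈ S := fun {i k} hik => by
    obtain ⟨j, hjk, hj⟩ := hR_inl_inr_inr i k hik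
    rw [hT, hj]
    exact wedge_inl_inr_inr_sub_mem b hik hjk
  suffices Submodule.span ℤ (sortedBasisWedges b) ≤ S.comap T from
    hT w ▸ this (span_sortedBasisWedges b ▸ Submodule.mem_top)
  rw [Submodule.span_le]
  rintro _ (((⟨i, j, k, rfl⟩ | ⟨i, j, k, rfl⟩) | ⟨i, j, k, rfl⟩) | ⟨i, j, k, rfl⟩)
  · exact hT_mem _ (Submodule.subset_span (.inl (.inl (.inl ⟨i, j, k, rfl⟩))))
  · exact hT_mem _ (Submodule.subset_span (.inl (.inl (.inr ⟨i, j, k, rfl⟩))))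
  · rw [SetLike.mem_coe, Submodule.mem_comap]
    by_cases hjk : j = k
    · rw [hjk, wedge_self12, map_zero]
      exact zero_mem S
    by_cases hij : i = j
    · rw [← hij]
      exact hT_inl_inr_inr_self (hij ▸ hjk)
    by_cases hik : i = k
    · rw [← hik, wedge_swap12, map_neg]
      exact neg_mem (hT_inl_inr_inr_self hij)
    · exact hT_mem _ (Submodule.subset_span (.inl (.inr ⟨i, j, k, hij, hjk, hik, rfl⟩)))
  · rw [SetLike.mem_coe, Submodule.mem_comap, hT, hR_inr_inr_inr, sub_self]
    exact zero_mem S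

variable {L : Submodule ℤ H} {ω : H →ₗ[ℤ] H →ₗ[ℤ] ℤ}

theorem projection_wedge_eq_zero {p : ⋀[ℤ]^3 H →ₗ[ℤ] ⋀[ℤ]^3 (H ⧸ L)}
    (hp : ∀ v : Fin 3 → H, p (wedge 3 v) = wedge 3 (⇑L.mkQ ∘ v)) {v : Fin 3 → H} (t : Fin 3)
    (hv : v t ∈ L) : p (wedge 3 v) = 0 := by
  rw [hp]
  exact wedge_eq_zero_of_apply_eq_zero t ((Submodule.Quotient.mk_eq_zero L).2 hv)

theorem span_kernelGenerators_le_ker_projection {p : ⋀[ℤ]^3 H →ₗ[ℤ] ⋀[ℤ]^3 (H ⧸ L)}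
    (hxL : ∀ i, b (.inl i) ∈ L) (hp : ∀ v : Fin 3 → H, p (wedge 3 v) = wedge 3 (⇑L.mkQ ∘ v)) :
    Submodule.span ℤ (kernelGenerators b) ≤ LinearMap.ker p := by
  rw [Submodule.span_le]
  rintro _ (((⟨i, j, k, rfl⟩ | ⟨i, j, k, rfl⟩) | ⟨i, j, k, -, -, -, rfl⟩) |
    ⟨i, j, k, -, -, -, rfl⟩)
  all_goals simp only [SetLike.mem_coe, LinearMap.mem_ker, map_add]
  · exact projection_wedge_eq_zero hp 0 (hxL i)
  · exact projection_wedge_eq_zero hp 0 (hxL i)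
  · exact projection_wedge_eq_zero hp 0 (hxL i)
  · rw [projection_wedge_eq_zero hp 1 (hxL i), projection_wedge_eq_zero hp 0 (hxL j), add_zero]

variable {c : ⋀[ℤ]^3 H →ₗ[ℤ] H ⧸ L}

theorem contraction_wedge_vecCons
    (hc : ∀ v : Fin 3 → H, c (wedge 3 v) =
      L.mkQ ((ω (v 0) (v 1)) • v 2 + (ω (v 1) (v 2)) • v 0 + (ω (v 2) (v 0)) • v 1))
    (u₁ u₂ u₃ : H) :
    c (wedge 3 ![u₁, u₂, u₃]) = L.mkQ (ω u₁ u₂ • u₃ + ω u₂ u₃ • u₁ + ω u₃ u₁ • u₂) :=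
  hc _

theorem contraction_wedge_eq_zero_of_mem
    (hc : ∀ v : Fin 3 → H, c (wedge 3 v) =
      L.mkQ ((ω (v 0) (v 1)) • v 2 + (ω (v 1) (v 2)) • v 0 + (ω (v 2) (v 0)) • v 1))
    {u₁ u₂ : H} (u₃ : H) (h₁ : u₁ ∈ L) (h₂ : u₂ ∈ L) (h : ω u₁ u₂ = 0) :
    c (wedge 3 ![u₁, u₂, u₃]) = 0 := by
  rw [contraction_wedge_vecCons hc, h, zero_smul, zero_add, Submodule.mkQ_apply,
    Submodule.Quotient.mk_eq_zero]
  exact add_mem (Submodule.smul_of_tower_mem _ _ h₁) (Submodule.smul_of_tower_mem _ _ h₂)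

theorem contraction_wedge_inr_inr_inr
    (hc : ∀ v : Fin 3 → H, c (wedge 3 v) =
      L.mkQ ((ω (v 0) (v 1)) • v 2 + (ω (v 1) (v 2)) • v 0 + (ω (v 2) (v 0)) • v 1))
    (hyy : ∀ i j, ω (b (.inr i)) (b (.inr j)) = 0) (i j k : ι) :
    c (wedge 3 ![b (.inr i), b (.inr j), b (.inr k)]) = 0 := by
  simp [contraction_wedge_vecCons hc, hyy]

variable [DecidableEq ι]

theorem contraction_wedge_inl_inr_inr
    (hc : ∀ v : Fin 3 → H, c (wedge 3 v) =
      L.mkQ ((ω (v 0) (v 1)) • v 2 + (ω (v 1) (v 2)) • v 0 + (ω (v 2) (v 0)) • v 1))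
    (hyy : ∀ i j, ω (b (.inr i)) (b (.inr j)) = 0)
    (hxy : ∀ i j, ω (b (.inl i)) (b (.inr j)) = if i = j then 1 else 0)
    (hyx : ∀ i j, ω (b (.inr i)) (b (.inl j)) = if i = j then -1 else 0) (i j k : ι) :
    c (wedge 3 ![b (.inl i), b (.inr j), b (.inr k)]) =
      L.mkQ ((if i = j then 1 else 0 : ℤ) • b (.inr k) -
        (if k = i then 1 else 0 : ℤ) • b (.inr j)) := by
  rw [contraction_wedge_vecCons hc, hxy, hyy, hyx, zero_smul, add_zero]
  split_ifs <;> simp [sub_eq_add_neg]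

theorem span_kernelGenerators_le_ker_contraction (hxL : ∀ i, b (.inl i) ∈ L)
    (hc : ∀ v : Fin 3 → H, c (wedge 3 v) =
      L.mkQ ((ω (v 0) (v 1)) • v 2 + (ω (v 1) (v 2)) • v 0 + (ω (v 2) (v 0)) • v 1))
    (hxx : ∀ i j, ω (b (.inl i)) (b (.inl j)) = 0)
    (hyy : ∀ i j, ω (b (.inr i)) (b (.inr j)) = 0)
    (hxy : ∀ i j, ω (b (.inl i)) (b (.inr j)) = if i = j then 1 else 0)
    (hyx : ∀ i j, ω (b (.inr i)) (b (.inl j)) = if i = j then -1 else 0) :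
    Submodule.span ℤ (kernelGenerators b) ≤ LinearMap.ker c := by
  rw [Submodule.span_le]
  rintro _ (((⟨i, j, k, rfl⟩ | ⟨i, j, k, rfl⟩) | ⟨i, j, k, hij, -, hik, rfl⟩) |
    ⟨i, j, k, -, hjk, hik, rfl⟩)
  all_goals simp only [SetLike.mem_coe, LinearMap.mem_ker, map_add]
  · exact contraction_wedge_eq_zero_of_mem hc _ (hxL i) (hxL j) (hxx i j)
  · exact contraction_wedge_eq_zero_of_mem hc _ (hxL i) (hxL j) (hxx i j)
  · simp [contraction_wedge_inl_inr_inr b hc hyy hxy hyx, hij, hik.symm]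
  · rw [wedge_swap01, map_neg]
    simp [contraction_wedge_inl_inr_inr b hc hyy hxy hyx, hik.symm, hjk.symm]

theorem span_kernelGenerators_le_ker_prod (hxL : ∀ i, b (.inl i) ∈ L)
    (hxx : ∀ i j, ω (b (.inl i)) (b (.inl j)) = 0)
    (hyy : ∀ i j, ω (b (.inr i)) (b (.inr j)) = 0)
    (hxy : ∀ i j, ω (b (.inl i)) (b (.inr j)) = if i = j then 1 else 0)
    (hyx : ∀ i j, ω (b (.inr i)) (b (.inl j)) = if i = j then -1 else 0)
    {p : ⋀[ℤ]^3 H →ₗ[ℤ] ⋀[ℤ]^3 (H ⧸ L)}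
    (hp : ∀ v : Fin 3 → H, p (wedge 3 v) = wedge 3 (⇑L.mkQ ∘ v))
    (hc : ∀ v : Fin 3 → H, c (wedge 3 v) =
      L.mkQ ((ω (v 0) (v 1)) • v 2 + (ω (v 1) (v 2)) • v 0 + (ω (v 2) (v 0)) • v 1)) :
    Submodule.span ℤ (kernelGenerators b) ≤ LinearMap.ker (p.prod c) := by
  rw [LinearMap.ker_prod]
  exact le_inf (span_kernelGenerators_le_ker_projection b hxL hp)
    (span_kernelGenerators_le_ker_contraction b hxL hc hxx hyy hxy hyx)

theorem exists_sub_mem_span_kernelGenerators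
    (hL : L = Submodule.span ℤ (Set.range fun i => b (.inl i)))
    (hxx : ∀ i j, ω (b (.inl i)) (b (.inl j)) = 0)
    (hyy : ∀ i j, ω (b (.inr i)) (b (.inr j)) = 0)
    (hxy : ∀ i j, ω (b (.inl i)) (b (.inr j)) = if i = j then 1 else 0)
    (hyx : ∀ i j, ω (b (.inr i)) (b (.inl j)) = if i = j then -1 else 0)
    {p : ⋀[ℤ]^3 H →ₗ[ℤ] ⋀[ℤ]^3 (H ⧸ L)}
    (hp : ∀ v : Fin 3 → H, p (wedge 3 v) = wedge 3 (⇑L.mkQ ∘ v))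
    (hc : ∀ v : Fin 3 → H, c (wedge 3 v) =
      L.mkQ ((ω (v 0) (v 1)) • v 2 + (ω (v 1) (v 2)) • v 0 + (ω (v 2) (v 0)) • v 1)) :
    ∃ Q : ⋀[ℤ]^3 (H ⧸ L) × (H ⧸ L) →ₗ[ℤ] ⋀[ℤ]^3 H,
      ∀ w, w - Q (p.prod c w) ∈ Submodule.span ℤ (kernelGenerators b) := by
  have hxL : ∀ i, b (.inl i) ∈ L := fun i => hL ▸ Submodule.subset_span ⟨i, rfl⟩
  let s₀ := L.liftQ (projInr b) (hL ▸ span_inl_le_ker_projInr b)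
  -- `⋀[ℤ]^3 (H ⧸ L)` carries `AddCommGroup.toIntModule`, not the quotient module structure
  -- for which `s₀` is linear, so the linearity of `s₀` is re-proved for the former.
  let s : H ⧸ L →ₗ[ℤ] H :=
    { toFun := s₀, map_add' := map_add s₀, map_smul' := fun n q =>
        (map_zsmul s₀.toAddMonoidHom n q).trans (int_smul_eq_zsmul _ n _).symm }
  have hs : ∀ h, s (L.mkQ h) = projInr b h := fun _ => rfl
  let Q := (exteriorPower.map 3 s).coprod (partnerWedge b ∘ₗ s)
  have hQ : ∀ v, Q (p.prod c (wedge 3 v)) =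
      wedge 3 (projInr b ∘ v) + partnerWedge b (s (c (wedge 3 v))) := fun v => by
    show exteriorPower.map 3 s (p (wedge 3 v)) + _ = _
    rw [hp]
    exact congrArg (· + _) (exteriorPower.map_apply_ιMulti s (L.mkQ ∘ v))
  refine ⟨Q, sub_mem_span_kernelGenerators b (R := Q ∘ₗ p.prod c) ?_
    (fun i k hik => ⟨partner k, partner_ne hik, ?_⟩) (fun i j k => ?_)⟩
  · exact (span_kernelGenerators_le_ker_prod b hxL hxx hyy hxy hyx hp hc).trans
      (LinearMap.ker_le_ker_comp _ _)
  · have h0 : wedge 3 (projInr b ∘ ![b (.inl i), b (.inr i), b (.inr k)]) = 0 :=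
      wedge_eq_zero_of_apply_eq_zero 0 (projInr_inl b i)
    show Q (p.prod c _) = _
    rw [hQ, contraction_wedge_inl_inr_inr b hc hyy hxy hyx, h0, if_pos rfl, if_neg hik.symm,
      one_smul, zero_smul, sub_zero, hs, projInr_inr, zero_add, partnerWedge_inr]
  · have hy : projInr b ∘ ![b (.inr i), b (.inr j), b (.inr k)] =
        ![b (.inr i), b (.inr j), b (.inr k)] := by
      ext t; fin_cases t <;> simp [projInr_inr]
    show Q (p.prod c _) = _
    rw [hQ, contraction_wedge_inr_inr_inr b hc hyy, map_zero, map_zero, add_zero, hy]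

end Symplectic

/-- `H` is free with symplectic basis `x_1,…,x_g,y_1,…,y_g` (indexed by `Fin g ⊕ Fin g`) for the
intersection pairing `ω` (`x_i·x_j = y_i·y_j = 0`, `x_i·y_j = δ_{ij} = -(y_j·x_i)`), and `L` is
the Lagrangian spanned by the `x_i`.  `p : Λ³H → Λ³(H/L)` is induced by the projection
`H → H/L` and `c : Λ³H → H/L` is the contraction
`h₁∧h₂∧h₃ ↦ (h₁·h₂)h₃ + (h₂·h₃)h₁ + (h₃·h₁)h₂` followed by the projection.  Then
`K = ker(p ⊕ c)` is the subgroup of `Λ³H` generated by the elements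
(1) `x_i ∧ x_j ∧ x_k`; (2) `x_i ∧ x_j ∧ y_k`; (3) `x_i ∧ y_j ∧ y_k` for `i, j, k` distinct;
(4) `y_i ∧ x_i ∧ y_k + x_j ∧ y_j ∧ y_k` for `i, j, k` distinct. -/
theorem ker_p_oplus_c_eq_span (g : ℕ) (H : Type) [AddCommGroup H] [Module ℤ H]
    (b : Module.Basis (Fin g ⊕ Fin g) ℤ H)
    (L : Submodule ℤ H)
    (hL : L = Submodule.span ℤ (Set.range fun i : Fin g => b (Sum.inl i)))
    (ω : H →ₗ[ℤ] H →ₗ[ℤ] ℤ)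
    (hxx : ∀ i j : Fin g, ω (b (Sum.inl i)) (b (Sum.inl j)) = 0)
    (hyy : ∀ i j : Fin g, ω (b (Sum.inr i)) (b (Sum.inr j)) = 0)
    (hxy : ∀ i j : Fin g, ω (b (Sum.inl i)) (b (Sum.inr j)) = if i = j then 1 else 0)
    (hyx : ∀ i j : Fin g, ω (b (Sum.inr i)) (b (Sum.inl j)) = if i = j then -1 else 0)
    (p : (⋀[ℤ]^3 H) →ₗ[ℤ] (⋀[ℤ]^3 (H ⧸ L)))
    (hp : ∀ v : Fin 3 → H, p (wedge 3 v) = wedge 3 (⇑L.mkQ ∘ v))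
    (c : (⋀[ℤ]^3 H) →ₗ[ℤ] H ⧸ L)
    (hc : ∀ v : Fin 3 → H, c (wedge 3 v) =
      L.mkQ ((ω (v 0) (v 1)) • v 2 + (ω (v 1) (v 2)) • v 0 + (ω (v 2) (v 0)) • v 1)) :
    LinearMap.ker (p.prod c) = Submodule.span ℤ
      ({w : ⋀[ℤ]^3 H | ∃ i j k : Fin g,
          w = wedge 3 ![b (Sum.inl i), b (Sum.inl j), b (Sum.inl k)]} ∪
       {w : ⋀[ℤ]^3 H | ∃ i j k : Fin g,
          w = wedge 3 ![b (Sum.inl i), b (Sum.inl j), b (Sum.inr k)]} ∪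
       {w : ⋀[ℤ]^3 H | ∃ i j k : Fin g, i ≠ j ∧ j ≠ k ∧ i ≠ k ∧
          w = wedge 3 ![b (Sum.inl i), b (Sum.inr j), b (Sum.inr k)]} ∪
       {w : ⋀[ℤ]^3 H | ∃ i j k : Fin g, i ≠ j ∧ j ≠ k ∧ i ≠ k ∧
          w = wedge 3 ![b (Sum.inr i), b (Sum.inl i), b (Sum.inr k)] +
              wedge 3 ![b (Sum.inl j), b (Sum.inr j), b (Sum.inr k)]}) := by
  have hxL : ∀ i, b (Sum.inl i) ∈ L := fun i => hL ▸ Submodule.subset_span ⟨i, rfl⟩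
  obtain ⟨Q, hQ⟩ := exists_sub_mem_span_kernelGenerators b hL hxx hyy hxy hyx hp hc
  exact le_antisymm (LinearMap.ker_le_of_forall_sub_mem Q hQ)
    (span_kernelGenerators_le_ker_prod b hxL hxx hyy hxy hyx hp hc)
end

section
/- Let F be a free group on a generating set {z_i}_{i∈I}, let m ≥ 1, and for each i let c_i ∈ F_m (the m-th lower central series subgroup, with F_1 = F). Let φ : F → F be the endomorphism determined by φ(z_i) = c_i z_i c_i^{-1}. Then for every w ∈ F one has w^{-1} φ(w) ∈ F_{m+1} = [F, F_m]. -/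
/-!
Modulo the normal subgroup `N = F_{m+1}`, each `c_i` is central, so `φ` and the identity agree on
the generators as maps into `F ⧸ N`; by freeness they agree everywhere, i.e. `w⁻¹ φ(w) ∈ N`.
-/

open scoped commutatorElement

theorem Subgroup.inv_mul_conj_mem_lowerCentralSeries_succ {G : Type*} [Group G]
    {S : Subgroup G} {m : ℕ} {c g : G} (hc : c ∈ S.lowerCentralSeries m) (hg : g ∈ S) :
    g⁻¹ * (c * g * c⁻¹) ∈ S.lowerCentralSeries (m + 1) := by
  have hcomm : ⁅g⁻¹, c⁆ ∈ S.lowerCentralSeries (m + 1) := by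
    rw [lowerCentralSeries_succ, commutator_comm]
    exact commutator_mem_commutator (S.inv_mem hg) hc
  simpa [commutatorElement_def, mul_assoc] using hcomm

theorem FreeGroup.inv_mul_mem_of_forall_of {α G : Type*} [Group G] {N : Subgroup G} [N.Normal]
    {f g : FreeGroup α →* G} (h : ∀ a, (f (of a))⁻¹ * g (of a) ∈ N) (w : FreeGroup α) :
    (f w)⁻¹ * g w ∈ N := by
  have hquot : (QuotientGroup.mk' N).comp f = (QuotientGroup.mk' N).comp g :=
    ext_hom _ _ fun a => QuotientGroup.eq.mpr (h a)
  exact QuotientGroup.eq.mp (DFunLike.congr_fun hquot w)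

/-- `lowerCentralSeries ⊤ m` is the paper's `F_{m+1}`, so this is the paper's statement with its
`m` shifted by one. -/
theorem conj_endo_lcs (I : Type) (m : ℕ) (c : I → FreeGroup I)
    (hc : ∀ i, c i ∈ Subgroup.lowerCentralSeries (⊤ : Subgroup (FreeGroup I)) m)
    (φ : FreeGroup I →* FreeGroup I)
    (hφ : ∀ i, φ (FreeGroup.of i) = c i * FreeGroup.of i * (c i)⁻¹)
    (w : FreeGroup I) :
    w⁻¹ * φ w ∈ Subgroup.lowerCentralSeries (⊤ : Subgroup (FreeGroup I)) (m + 1) := by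
  refine FreeGroup.inv_mul_mem_of_forall_of (f := MonoidHom.id _) (fun i => ?_) w
  rw [MonoidHom.id_apply, hφ i]
  exact Subgroup.inv_mul_conj_mem_lowerCentralSeries_succ (hc i) (Subgroup.mem_top _)
end

section
/- Let g ≥ 3, let H be a free ℤ-module with symplectic basis x_1,…,x_g,y_1,…,y_g and let L ⊆ H be the Lagrangian submodule spanned by x_1,…,x_g. For 0 ≤ m ≤ 3 let K_m ⊆ Λ³H be the subgroup generated by elements h_1 ∧ h_2 ∧ h_3 with at least m of the h_i in L, and let K be the kernel of p ⊕ c : Λ³H → Λ³(H/L) ⊕ H/L, where p is induced by the projection H → H/L and c is the contraction h_1 ∧ h_2 ∧ h_3 ↦ (h_1·h_2)h_3 + (h_2·h_3)h_1 + (h_3·h_1)h_2 followed by the projection H → H/L. Then K_2 ⊆ K ⊆ K_1 and both inclusions are strict: K_1 ⊋ K ⊋ K_2. -/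
open ExteriorAlgebra

/-!
The basis yields a section `σ` of `H → H/L`; put `τ = σ ∘ mkQ`. Writing each `v i` as
`τ (v i) + (v i - τ (v i))` and expanding multilinearly, `v 0 ∧ v 1 ∧ v 2 - Λ³τ (v 0 ∧ v 1 ∧ v 2)`
is a sum of wedges with an entry in `L`; as `Λ³τ` factors through `p`, this gives `ker p = K 1`.
Wedges with two entries in `L` are killed by `p` and, `L` being isotropic, by `c`.
For strictness, `x_i ∧ y_j ∧ y_k` lies in `ker (p ⊕ c)` but not in `K 2`, on which the functional
`det (x_i^*, y_j^*, y_k^*)` vanishes; and `x_i ∧ y_i ∧ y_j ∈ K 1` is sent by `c` to `y_j ≠ 0`.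
-/

open Submodule

lemma Fin.three_pairs_of_two_le_card {P : Fin 3 → Prop} {s : Finset (Fin 3)} (hs : 2 ≤ s.card)
    (hP : ∀ i ∈ s, P i) : (P 0 ∧ P 1) ∨ (P 0 ∧ P 2) ∨ (P 1 ∧ P 2) := by
  obtain ⟨i, hi, j, hj, hij⟩ := Finset.one_lt_card.mp hs
  have := hP i hi
  have := hP j hj
  fin_cases i <;> fin_cases j <;> first | exact absurd rfl hij | tauto

variable {R : Type*} [CommRing R] {M N : Type*} [AddCommGroup M] [Module R M]
  [AddCommGroup N] [Module R N]

namespace exteriorPower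

def wedgeFiltration (L : Submodule R M) (n m : ℕ) : Submodule R (⋀[R]^n M) :=
  span R {w | ∃ v : Fin n → M,
    (∃ s : Finset (Fin n), m ≤ s.card ∧ ∀ i ∈ s, v i ∈ L) ∧ w = ιMulti R n v}

variable {L : Submodule R M} {n : ℕ}

lemma ιMulti_mem_wedgeFiltration {m : ℕ} {v : Fin n → M} (s : Finset (Fin n))
    (hs : m ≤ s.card) (hv : ∀ i ∈ s, v i ∈ L) : ιMulti R n v ∈ wedgeFiltration L n m :=
  subset_span ⟨v, ⟨s, hs, hv⟩, rfl⟩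

lemma ιMulti_mem_wedgeFiltration_one {v : Fin n → M} {i : Fin n} (hi : v i ∈ L) :
    ιMulti R n v ∈ wedgeFiltration L n 1 :=
  ιMulti_mem_wedgeFiltration {i} (by simp) (by simpa using hi)

lemma wedgeFiltration_antitone : Antitone (wedgeFiltration L n) :=
  fun _ _ hm => span_mono fun _ ⟨v, ⟨s, hs, hv⟩, hw⟩ => ⟨v, ⟨s, hm.trans hs, hv⟩, hw⟩

lemma wedgeFiltration_le_ker {m : ℕ} (f : ⋀[R]^n M →ₗ[R] N)
    (hf : ∀ (v : Fin n → M) (s : Finset (Fin n)), m ≤ s.card → (∀ i ∈ s, v i ∈ L) →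
      f (ιMulti R n v) = 0) :
    wedgeFiltration L n m ≤ LinearMap.ker f := by
  rw [wedgeFiltration, span_le]
  rintro _ ⟨v, ⟨s, hs, hv⟩, rfl⟩
  exact hf v s hs hv

lemma wedgeFiltration_one_le_ker_map (π : M →ₗ[R] N) (hπ : L ≤ LinearMap.ker π) :
    wedgeFiltration L n 1 ≤ LinearMap.ker (map n π) :=
  wedgeFiltration_le_ker _ fun v s hs hv => by
    obtain ⟨i, hi⟩ := Finset.card_pos.mp hs
    rw [map_apply_ιMulti]
    exact (ιMulti R n).map_coord_zero i (hπ (hv i hi))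

lemma ιMulti_add_sub_ιMulti_mem_wedgeFiltration_one (l u : Fin n → M) (hl : ∀ i, l i ∈ L) :
    ιMulti R n (l + u) - ιMulti R n u ∈ wedgeFiltration L n 1 := by
  classical
  -- in the multilinear expansion, only the `s = ∅` term has no entry `l i ∈ L`
  rw [(ιMulti R n).map_add_univ, ← Finset.add_sum_erase _ _ (Finset.mem_univ ∅),
    Finset.piecewise_empty, add_sub_cancel_left]
  refine sum_mem fun s hs => ιMulti_mem_wedgeFiltration s ?_ fun i hi => ?_
  · exact Finset.card_pos.mpr (Finset.nonempty_iff_ne_empty.mpr (Finset.ne_of_mem_erase hs))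
  · rw [Finset.piecewise_eq_of_mem _ _ _ hi]
    exact hl i

lemma sub_map_mem_wedgeFiltration_one {τ : M →ₗ[R] M} (hτ : ∀ v, v - τ v ∈ L)
    (w : ⋀[R]^n M) : w - map n τ w ∈ wedgeFiltration L n 1 := by
  have hw : w ∈ span R (Set.range (ιMulti R n)) := by rw [ιMulti_span]; trivial
  induction hw using span_induction with
  | mem _ h =>
    obtain ⟨v, rfl⟩ := h
    rw [map_apply_ιMulti]
    simpa using ιMulti_add_sub_ιMulti_mem_wedgeFiltration_one (v - τ ∘ v) (τ ∘ v) fun i => hτ (v i)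
  | zero => simp
  | add _ _ _ _ h h' =>
    rw [map_add, add_sub_add_comm]
    exact add_mem h h'
  | smul a _ _ h =>
    rw [map_smul, ← smul_sub]
    exact smul_mem _ a h

lemma ker_map_eq_wedgeFiltration_one (π : M →ₗ[R] N) (σ : N →ₗ[R] M)
    (hσ : π ∘ₗ σ = LinearMap.id) (hπ : LinearMap.ker π = L) :
    LinearMap.ker (map n π) = wedgeFiltration L n 1 := by
  refine le_antisymm (fun w hw => ?_) (wedgeFiltration_one_le_ker_map π hπ.ge)
  have hτ (v : M) : v - σ (π v) ∈ L := by
    rw [← hπ, LinearMap.mem_ker, map_sub, ← LinearMap.comp_apply π σ, hσ, LinearMap.id_apply,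
      sub_self]
  have := sub_map_mem_wedgeFiltration_one (n := n) (τ := σ ∘ₗ π) hτ w
  rwa [map_comp, LinearMap.comp_apply, LinearMap.mem_ker.mp hw, map_zero, sub_zero] at this

noncomputable def dualDet (φ : Fin n → Module.Dual R M) : ⋀[R]^n M →ₗ[R] R :=
  alternatingMapLinearEquiv (Matrix.detRowAlternating.compLinearMap (LinearMap.pi φ))

lemma dualDet_ιMulti (φ : Fin n → Module.Dual R M) (v : Fin n → M) :
    dualDet φ (ιMulti R n v) = (Matrix.of fun i j => φ j (v i)).det := by
  rw [dualDet, alternatingMapLinearEquiv_apply_ιMulti]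
  rfl

lemma wedgeFiltration_two_le_ker_dualDet (φ : Fin 3 → Module.Dual R M)
    (h₁ : L ≤ LinearMap.ker (φ 1)) (h₂ : L ≤ LinearMap.ker (φ 2)) :
    wedgeFiltration L 3 2 ≤ LinearMap.ker (dualDet φ) :=
  wedgeFiltration_le_ker _ fun v s hs hv => by
    have hL {i} (hi : v i ∈ L) : φ 1 (v i) = 0 ∧ φ 2 (v i) = 0 := ⟨h₁ hi, h₂ hi⟩
    rw [dualDet_ιMulti, Matrix.det_fin_three]
    rcases Fin.three_pairs_of_two_le_card hs hv with ⟨ha, hb⟩ | ⟨ha, hb⟩ | ⟨ha, hb⟩ <;>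
      simp [hL ha, hL hb]

end exteriorPower

lemma LinearMap.apply_apply_eq_zero_of_mem_span (ω : M →ₗ[R] M →ₗ[R] N) {s : Set M}
    (h : ∀ u ∈ s, ∀ w ∈ s, ω u w = 0) {u w : M} (hu : u ∈ span R s) (hw : w ∈ span R s) :
    ω u w = 0 := by
  have hs (u : M) (hu : u ∈ s) : span R s ≤ LinearMap.ker (ω u) :=
    span_le.mpr fun w hw => h u hu w hw
  exact (span_le.mpr fun u hu => hs u hu hw : span R s ≤ LinearMap.ker (ω.flip w)) hu

def tripleContraction (ω : M →ₗ[R] M →ₗ[R] R) (v : Fin 3 → M) : M :=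
  ω (v 0) (v 1) • v 2 + ω (v 1) (v 2) • v 0 + ω (v 2) (v 0) • v 1

lemma tripleContraction_mem {ω : M →ₗ[R] M →ₗ[R] R} {L : Submodule R M}
    (hL : ∀ u ∈ L, ∀ w ∈ L, ω u w = 0) {v : Fin 3 → M} {s : Finset (Fin 3)} (hs : 2 ≤ s.card)
    (hv : ∀ i ∈ s, v i ∈ L) : tripleContraction ω v ∈ L := by
  unfold tripleContraction
  rcases Fin.three_pairs_of_two_le_card hs hv with ⟨h₀, h₁⟩ | ⟨h₀, h₂⟩ | ⟨h₁, h₂⟩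
  · rw [hL _ h₀ _ h₁, zero_smul, zero_add]
    exact add_mem (smul_mem _ _ h₀) (smul_mem _ _ h₁)
  · rw [hL _ h₂ _ h₀, zero_smul, add_zero]
    exact add_mem (smul_mem _ _ h₂) (smul_mem _ _ h₀)
  · rw [hL _ h₁ _ h₂, zero_smul, add_zero]
    exact add_mem (smul_mem _ _ h₂) (smul_mem _ _ h₁)

namespace Module.Basis

section

variable {ι κ : Type*} (b : Basis (ι ⊕ κ) R M)

lemma inl_mem_span_inl (i : ι) : b (Sum.inl i) ∈ span R (Set.range fun i => b (Sum.inl i)) :=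
  subset_span ⟨i, rfl⟩

lemma span_inl_le_ker_coord_inr (k : κ) :
    span R (Set.range fun i => b (Sum.inl i)) ≤ LinearMap.ker (b.coord (Sum.inr k)) :=
  span_le.mpr <| by rintro _ ⟨i, rfl⟩; simp

lemma inr_notMem_span_inl [Nontrivial R] (k : κ) :
    b (Sum.inr k) ∉ span R (Set.range fun i => b (Sum.inl i)) :=
  fun h => by simpa using b.span_inl_le_ker_coord_inr k h

lemma exists_mkQ_comp_eq_id_span_inl :
    ∃ σ : (M ⧸ span R (Set.range fun i => b (Sum.inl i))) →ₗ[R] M,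
      (span R (Set.range fun i => b (Sum.inl i))).mkQ ∘ₗ σ = LinearMap.id := by
  let τ := b.constr R (Sum.elim 0 fun k => b (Sum.inr k))
  have hτ : span R (Set.range fun i => b (Sum.inl i)) ≤ LinearMap.ker τ :=
    span_le.mpr <| by rintro _ ⟨i, rfl⟩; simp [τ]
  refine ⟨liftQ _ τ hτ, linearMap_qext _ (b.ext fun j => ?_)⟩
  rcases j with i | k
  · simpa [τ, eq_comm (a := (0 : M ⧸ _))] using b.inl_mem_span_inl i
  · simp [τ]

lemma ιMulti_inl_inr_inr_notMem_wedgeFiltration_two [Nontrivial R] (i : ι) {j k : κ}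
    (hjk : j ≠ k) : exteriorPower.ιMulti R 3 ![b (Sum.inl i), b (Sum.inr j), b (Sum.inr k)] ∉
      exteriorPower.wedgeFiltration (span R (Set.range fun i => b (Sum.inl i))) 3 2 := fun h => by
  have := exteriorPower.wedgeFiltration_two_le_ker_dualDet
    ![b.coord (Sum.inl i), b.coord (Sum.inr j), b.coord (Sum.inr k)]
    (b.span_inl_le_ker_coord_inr j) (b.span_inl_le_ker_coord_inr k) h
  simp [exteriorPower.dualDet_ιMulti, Matrix.det_fin_three, hjk, hjk.symm] at this

end

section

variable {ι : Type*} (b : Basis (ι ⊕ ι) R M) {ω : M →ₗ[R] M →ₗ[R] R}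

lemma isotropic_span_inl (hxx : ∀ i j, ω (b (Sum.inl i)) (b (Sum.inl j)) = 0) :
    ∀ u ∈ span R (Set.range fun i => b (Sum.inl i)),
      ∀ w ∈ span R (Set.range fun i => b (Sum.inl i)), ω u w = 0 := fun _ hu _ hw =>
  ω.apply_apply_eq_zero_of_mem_span (by rintro _ ⟨i, rfl⟩ _ ⟨j, rfl⟩; exact hxx i j) hu hw

variable [DecidableEq ι]

lemma tripleContraction_inl_inr_inr_mem
    (hxy : ∀ i j, ω (b (Sum.inl i)) (b (Sum.inr j)) = if i = j then 1 else 0)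
    (hyx : ∀ i j, ω (b (Sum.inr i)) (b (Sum.inl j)) = if i = j then -1 else 0)
    {i j k : ι} (hij : i ≠ j) (hki : k ≠ i) :
    tripleContraction ω ![b (Sum.inl i), b (Sum.inr j), b (Sum.inr k)] ∈
      span R (Set.range fun i => b (Sum.inl i)) := by
  simp only [tripleContraction, Fin.isValue, Matrix.cons_val_zero, Matrix.cons_val_one,
    Matrix.cons_val, hxy, hyx, hij, hki, ↓reduceIte, zero_smul, zero_add, add_zero]
  exact smul_mem _ _ (b.inl_mem_span_inl i)

lemma tripleContraction_inl_inr_inr_notMem [Nontrivial R]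
    (hxy : ∀ i j, ω (b (Sum.inl i)) (b (Sum.inr j)) = if i = j then 1 else 0)
    (hyx : ∀ i j, ω (b (Sum.inr i)) (b (Sum.inl j)) = if i = j then -1 else 0)
    {i j : ι} (hji : j ≠ i) :
    tripleContraction ω ![b (Sum.inl i), b (Sum.inr i), b (Sum.inr j)] ∉
      span R (Set.range fun i => b (Sum.inl i)) := fun h => by
  simp only [tripleContraction, Fin.isValue, Matrix.cons_val_zero, Matrix.cons_val_one,
    Matrix.cons_val, hxy, hyx, hji, ↓reduceIte, one_smul, zero_smul, add_zero] at h
  exact b.inr_notMem_span_inl j ((add_mem_cancel_right (smul_mem _ _ (b.inl_mem_span_inl i))).mp h)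

end

end Module.Basis

lemma wedge_eq_ιMulti {M : Type*} [AddCommGroup M] [Module ℤ M] (n : ℕ) (v : Fin n → M) :
    wedge n v = exteriorPower.ιMulti ℤ n v :=
  rfl

/-- `AddMonoidHom.toIntLinearMap` for arbitrary `Module ℤ` structures: in the theorem `H` carries
a given one, while `H ⧸ L` and `⋀[ℤ]^3 (H ⧸ L)` carry `AddCommGroup.toIntModule`. -/
def AddMonoidHom.toIntLinearMap' {A B : Type*} [AddCommGroup A] [AddCommGroup B] [Module ℤ A]
    [Module ℤ B] (f : A →+ B) : A →ₗ[ℤ] B where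
  toFun := f
  map_add' := f.map_add
  map_smul' n a := by simpa using map_intCast_smul f ℤ ℤ n a

section Int

variable {M : Type*} [AddCommGroup M] [Module ℤ M]

/-- The `•` on the right is `zsmul`, not the scalar action of the given `Module ℤ M`. -/
lemma tripleContraction_eq_zsmul (ω : M →ₗ[ℤ] M →ₗ[ℤ] ℤ) (v : Fin 3 → M) :
    tripleContraction ω v = ω (v 0) (v 1) • v 2 + ω (v 1) (v 2) • v 0 + ω (v 2) (v 0) • v 1 := by
  simp only [tripleContraction, ← Int.cast_smul_eq_zsmul ℤ, Int.cast_id]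

lemma ker_eq_wedgeFiltration_one_of_section {L : Submodule ℤ M} {n : ℕ} (σ : M ⧸ L →+ M)
    (hσ : ∀ q, L.mkQ (σ q) = q) (p : (⋀[ℤ]^n M) →ₗ[ℤ] (⋀[ℤ]^n (M ⧸ L)))
    (hp : ∀ v, p (exteriorPower.ιMulti ℤ n v) = exteriorPower.ιMulti ℤ n (⇑L.mkQ ∘ v)) :
    LinearMap.ker p = exteriorPower.wedgeFiltration L n 1 := by
  let π := L.mkQ.toAddMonoidHom.toIntLinearMap'
  have hp' : p = exteriorPower.map n π := exteriorPower.linearMap_ext <|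
    AlternatingMap.ext fun v => (hp v).trans (exteriorPower.map_apply_ιMulti π v).symm
  rw [hp']
  exact exteriorPower.ker_map_eq_wedgeFiltration_one π σ.toIntLinearMap' (LinearMap.ext hσ)
    (by ext; exact Submodule.Quotient.mk_eq_zero L)

end Int

theorem K2_lt_ker_lt_K1_general (g : ℕ) (hg : 3 ≤ g) (H : Type) [AddCommGroup H] [Module ℤ H]
    (b : Module.Basis (Fin g ⊕ Fin g) ℤ H)
    (L : Submodule ℤ H)
    (hL : L = Submodule.span ℤ (Set.range fun i : Fin g => b (Sum.inl i)))
    (K : ℕ → Submodule ℤ (⋀[ℤ]^3 H))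
    (hK : ∀ m, K m = Submodule.span ℤ {w : ⋀[ℤ]^3 H | ∃ v : Fin 3 → H,
      (∃ s : Finset (Fin 3), m ≤ s.card ∧ ∀ i ∈ s, v i ∈ L) ∧ w = wedge 3 v})
    (ω : H →ₗ[ℤ] H →ₗ[ℤ] ℤ)
    (hxx : ∀ i j : Fin g, ω (b (Sum.inl i)) (b (Sum.inl j)) = 0)
    (hxy : ∀ i j : Fin g, ω (b (Sum.inl i)) (b (Sum.inr j)) = if i = j then 1 else 0)
    (hyx : ∀ i j : Fin g, ω (b (Sum.inr i)) (b (Sum.inl j)) = if i = j then -1 else 0)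
    (p : (⋀[ℤ]^3 H) →ₗ[ℤ] (⋀[ℤ]^3 (H ⧸ L)))
    (hp : ∀ v : Fin 3 → H, p (wedge 3 v) = wedge 3 (⇑L.mkQ ∘ v))
    (c : (⋀[ℤ]^3 H) →ₗ[ℤ] H ⧸ L)
    (hc : ∀ v : Fin 3 → H, c (wedge 3 v) =
      L.mkQ ((ω (v 0) (v 1)) • v 2 + (ω (v 1) (v 2)) • v 0 + (ω (v 2) (v 0)) • v 1)) :
    K 2 < LinearMap.ker (p.prod c) ∧ LinearMap.ker (p.prod c) < K 1 := by
  simp only [wedge_eq_ιMulti, ← tripleContraction_eq_zsmul] at hK hp hc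
  have hKf : K = exteriorPower.wedgeFiltration L 3 := funext hK
  obtain ⟨σ, hσ⟩ := hL ▸ b.exists_mkQ_comp_eq_id_span_inl
  have hpK : LinearMap.ker p = K 1 :=
    hKf ▸ ker_eq_wedgeFiltration_one_of_section σ (DFunLike.congr_fun hσ) p hp
  have hc_ker {v : Fin 3 → H} :
      exteriorPower.ιMulti ℤ 3 v ∈ LinearMap.ker c ↔ tripleContraction ω v ∈ L := by
    rw [LinearMap.mem_ker, hc, Submodule.mkQ_apply, Submodule.Quotient.mk_eq_zero]
  have hK2c : K 2 ≤ LinearMap.ker c := hKf ▸ exteriorPower.wedgeFiltration_le_ker c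
    fun v s hs hv => hc_ker.mpr (tripleContraction_mem (hL ▸ b.isotropic_span_inl hxx) hs hv)
  obtain ⟨i, j, k, hij, hki, hjk⟩ : ∃ i j k : Fin g, i ≠ j ∧ k ≠ i ∧ j ≠ k :=
    ⟨⟨0, by omega⟩, ⟨1, by omega⟩, ⟨2, by omega⟩, by simp [Fin.ext_iff]⟩
  have hK1 (v : Fin 3 → H) (hv : v 0 = b (Sum.inl i)) : exteriorPower.ιMulti ℤ 3 v ∈ K 1 :=
    hKf ▸ exteriorPower.ιMulti_mem_wedgeFiltration_one (i := 0) (hv ▸ hL ▸ b.inl_mem_span_inl i)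
  have he₁ : ∃ e ∈ K 1 ⊓ LinearMap.ker c, e ∉ K 2 :=
    ⟨exteriorPower.ιMulti ℤ 3 ![b (Sum.inl i), b (Sum.inr j), b (Sum.inr k)],
      ⟨hK1 _ rfl, hc_ker.mpr (hL ▸ b.tripleContraction_inl_inr_inr_mem hxy hyx hij hki)⟩,
      hKf ▸ hL ▸ b.ιMulti_inl_inr_inr_notMem_wedgeFiltration_two i hjk⟩
  have he₂ : ∃ e ∈ K 1, e ∉ K 1 ⊓ LinearMap.ker c :=
    ⟨exteriorPower.ιMulti ℤ 3 ![b (Sum.inl i), b (Sum.inr i), b (Sum.inr j)], hK1 _ rfl,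
      fun h => b.tripleContraction_inl_inr_inr_notMem hxy hyx hij.symm (hL ▸ hc_ker.mp h.2)⟩
  have hK21 : K 2 ≤ K 1 := hKf ▸ exteriorPower.wedgeFiltration_antitone one_le_two
  rw [LinearMap.ker_prod, hpK]
  exact ⟨SetLike.lt_iff_le_and_exists.mpr ⟨le_inf hK21 hK2c, he₁⟩,
    SetLike.lt_iff_le_and_exists.mpr ⟨inf_le_left, he₂⟩⟩

/-- For `g ≥ 3`: `H` free with symplectic basis `x_1,…,x_g,y_1,…,y_g` for the intersection
pairing `ω`, `L` the Lagrangian spanned by the `x_i`.  `K m ⊆ Λ³H` is the subgroup generated by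
wedges `h₁∧h₂∧h₃` with at least `m` of the `h_i` in `L`; `K = ker(p ⊕ c)` where
`p : Λ³H → Λ³(H/L)` is induced by the projection and `c : Λ³H → H/L` is the contraction
`h₁∧h₂∧h₃ ↦ (h₁·h₂)h₃ + (h₂·h₃)h₁ + (h₃·h₁)h₂` followed by the projection.  Then
`K 1 ⊋ K ⊋ K 2` (both inclusions strict). -/
theorem K2_lt_ker_lt_K1 (g : ℕ) (hg : 3 ≤ g) (H : Type) [AddCommGroup H] [Module ℤ H]
    (b : Module.Basis (Fin g ⊕ Fin g) ℤ H)
    (L : Submodule ℤ H)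
    (hL : L = Submodule.span ℤ (Set.range fun i : Fin g => b (Sum.inl i)))
    (K : ℕ → Submodule ℤ (⋀[ℤ]^3 H))
    (hK : ∀ m, K m = Submodule.span ℤ {w : ⋀[ℤ]^3 H | ∃ v : Fin 3 → H,
      (∃ s : Finset (Fin 3), m ≤ s.card ∧ ∀ i ∈ s, v i ∈ L) ∧ w = wedge 3 v})
    (ω : H →ₗ[ℤ] H →ₗ[ℤ] ℤ)
    (hxx : ∀ i j : Fin g, ω (b (Sum.inl i)) (b (Sum.inl j)) = 0)
    (hyy : ∀ i j : Fin g, ω (b (Sum.inr i)) (b (Sum.inr j)) = 0)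
    (hxy : ∀ i j : Fin g, ω (b (Sum.inl i)) (b (Sum.inr j)) = if i = j then 1 else 0)
    (hyx : ∀ i j : Fin g, ω (b (Sum.inr i)) (b (Sum.inl j)) = if i = j then -1 else 0)
    (p : (⋀[ℤ]^3 H) →ₗ[ℤ] (⋀[ℤ]^3 (H ⧸ L)))
    (hp : ∀ v : Fin 3 → H, p (wedge 3 v) = wedge 3 (⇑L.mkQ ∘ v))
    (c : (⋀[ℤ]^3 H) →ₗ[ℤ] H ⧸ L)
    (hc : ∀ v : Fin 3 → H, c (wedge 3 v) =
      L.mkQ ((ω (v 0) (v 1)) • v 2 + (ω (v 1) (v 2)) • v 0 + (ω (v 2) (v 0)) • v 1)) :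
    K 2 < LinearMap.ker (p.prod c) ∧ LinearMap.ker (p.prod c) < K 1 :=
  K2_lt_ker_lt_K1_general g hg H b L hL K hK ω hxx hxy hyx p hp c hc
end
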